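/- Let f : ℝⁿ → (-∞,+∞] be a function bounded from below with lim_{|ξ|→∞} f(ξ)/|ξ| = +∞. If f is lower semicontinuous, then its level convex envelope f^lc is lower semicontinuous. -/

import Mathlib

open Set

/-- A function on `ℝⁿ` with values in a linear order is *level convex* if
`f (t ξ + (1-t) η) ≤ max (f ξ) (f η)` for all `ξ, η` and `t ∈ [0,1]`. -/
def LevelConvex {n : ℕ} {β : Type*} [LinearOrder β]
    (f : EuclideanSpace ℝ (Fin n) → β) : Prop :=
  ∀ ξ η : EuclideanSpace ℝ (Fin n), ∀ t ∈ Set.Icc (0 : ℝ) 1,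
    f (t • ξ + (1 - t) • η) ≤ max (f ξ) (f η)

/-- The level convex envelope of `f : ℝⁿ → [-∞,+∞]`. -/
noncomputable def lcEnv {n : ℕ} (f : EuclideanSpace ℝ (Fin n) → EReal) :
    EuclideanSpace ℝ (Fin n) → EReal :=
  fun ξ => ⨆ (g : EuclideanSpace ℝ (Fin n) → EReal)
    (_ : LevelConvex g ∧ g ≤ f), g ξ

/-!
A function is level convex iff its sublevel sets are convex, so `f^lc ξ` is the infimum of the
`c` with `ξ ∈ co {f ≤ c}`, and `{f^lc ≤ c} = ⋂_{d > c} co {f ≤ d}`. Lower semicontinuity and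
superlinear growth make each `{f ≤ d}` compact, and in finite dimensions Carathéodory's theorem
makes its convex hull compact too. So the sublevel sets of `f^lc` are closed.
-/

section Caratheodory

variable {𝕜 E : Type*} [Field 𝕜] [LinearOrder 𝕜] [IsStrictOrderedRing 𝕜]
  [AddCommGroup E] [Module 𝕜 E] [FiniteDimensional 𝕜 E]

/-- By Carathéodory, a point of the hull is a combination of an affinely independent family,
which has at most `finrank 𝕜 E + 1` members; pad it with zero weights. -/
theorem convexHull_eq_image_stdSimplex_prod_pi (s : Set E) :
    convexHull 𝕜 s =
      (fun p : (Fin (Module.finrank 𝕜 E + 1) → 𝕜) × (Fin (Module.finrank 𝕜 E + 1) → E) =>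
        ∑ j, p.1 j • p.2 j) '' (stdSimplex 𝕜 _ ×ˢ univ.pi fun _ => s) := by
  classical
  refine Subset.antisymm (fun x hx => ?_) ?_
  · obtain ⟨x₀, hx₀⟩ := convexHull_nonempty_iff.1 ⟨x, hx⟩
    obtain ⟨ι, _, z, w, hzs, hz, hw, hw1, rfl⟩ := eq_pos_convex_span_of_mem_convexHull hx
    have hcard : Fintype.card ι ≤ Fintype.card (Fin (Module.finrank 𝕜 E + 1)) := by
      simpa using hz.card_le_finrank_succ.trans
        (Nat.succ_le_succ (Submodule.finrank_le _))
    obtain ⟨e⟩ := Function.Embedding.nonempty_of_card_le hcard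
    set w' := Function.extend e w 0
    set z' := Function.extend e z fun _ => x₀
    have hw'_apply (i : ι) : w' (e i) = w i := e.injective.extend_apply _ _ _
    have hz'_apply (i : ι) : z' (e i) = z i := e.injective.extend_apply _ _ _
    have hw'_out {j} (hj : j ∉ range e) : w' j = 0 := by
      simp only [w', Function.extend_apply' _ _ _ (by simpa using hj), Pi.zero_apply]
    refine ⟨(w', z'), ⟨⟨fun j => ?_, ?_⟩, fun j _ => ?_⟩, ?_⟩
    · by_cases hj : j ∈ range e
      · obtain ⟨i, rfl⟩ := hj
        simpa only [hw'_apply] using (hw i).le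
      · exact (hw'_out hj).ge
    · rw [← hw1]
      exact (Fintype.sum_of_injective e e.injective _ _ (fun j hj => hw'_out hj)
        fun i => (hw'_apply i).symm).symm
    · by_cases hj : j ∈ range e
      · obtain ⟨i, rfl⟩ := hj
        simpa only [hz'_apply] using hzs (mem_range_self i)
      · simpa [z', Function.extend_apply' _ _ _ (by simpa using hj)] using hx₀
    · exact (Fintype.sum_of_injective e e.injective _ _
        (fun j hj => by simp only [hw'_out hj, zero_smul])
        fun i => by simp only [hw'_apply, hz'_apply]).symm
  · rintro _ ⟨⟨w, z⟩, ⟨hw, hz⟩, rfl⟩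
    exact (convex_convexHull 𝕜 s).sum_mem (fun j _ => hw.1 j) hw.2
      fun j _ => subset_convexHull 𝕜 s (hz j trivial)

end Caratheodory

theorem IsCompact.convexHull {E : Type*} [AddCommGroup E] [Module ℝ E] [TopologicalSpace E]
    [IsTopologicalAddGroup E] [ContinuousSMul ℝ E] [FiniteDimensional ℝ E] {s : Set E}
    (hs : IsCompact s) : IsCompact (convexHull ℝ s) := by
  rw [convexHull_eq_image_stdSimplex_prod_pi]
  refine ((isCompact_stdSimplex ℝ _).prod (isCompact_univ_pi fun _ => hs)).image ?_
  fun_prop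

section SublevelHull

variable {E : Type*} [AddCommGroup E] [Module ℝ E] {f : E → EReal} {ξ : E} {c : EReal}

noncomputable def sublevelHullEnv (f : E → EReal) (ξ : E) : EReal :=
  sInf {c | ξ ∈ convexHull ℝ {x | f x ≤ c}}

theorem sublevelHullEnv_le_of_mem (h : ξ ∈ convexHull ℝ {x | f x ≤ c}) :
    sublevelHullEnv f ξ ≤ c :=
  sInf_le h

theorem mem_convexHull_of_sublevelHullEnv_lt (h : sublevelHullEnv f ξ < c) :
    ξ ∈ convexHull ℝ {x | f x ≤ c} := by
  obtain ⟨d, hd, hdc⟩ := sInf_lt_iff.1 h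
  exact convexHull_mono (fun x hx => le_trans hx hdc.le) hd

theorem setOf_sublevelHullEnv_le (f : E → EReal) (c : EReal) :
    {ξ | sublevelHullEnv f ξ ≤ c} = ⋂ (d : ℝ) (_ : c < d), convexHull ℝ {x | f x ≤ d} := by
  ext ξ
  simp only [mem_ofPred_eq, mem_iInter]
  refine ⟨fun hξ d hd => mem_convexHull_of_sublevelHullEnv_lt (hξ.trans_lt hd), fun h => ?_⟩
  by_contra! hlt
  obtain ⟨d, hcd, hdξ⟩ := EReal.exists_between_coe_real hlt
  exact (sublevelHullEnv_le_of_mem (h d hcd)).not_gt hdξ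

theorem sublevelHullEnv_le_self (f : E → EReal) : sublevelHullEnv f ≤ f :=
  fun ξ => sublevelHullEnv_le_of_mem (subset_convexHull ℝ _ (le_refl (f ξ)))

theorem quasiconvexOn_sublevelHullEnv (f : E → EReal) :
    QuasiconvexOn ℝ univ (sublevelHullEnv f) := fun c => by
  simpa only [mem_univ, true_and, setOf_sublevelHullEnv_le] using
    convex_iInter₂ fun (d : ℝ) (_ : c < d) => convex_convexHull ℝ {x | f x ≤ (d : EReal)}

theorem QuasiconvexOn.le_sublevelHullEnv {g : E → EReal} (hg : QuasiconvexOn ℝ univ g)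
    (hgf : g ≤ f) : g ≤ sublevelHullEnv f := fun ξ =>
  le_sInf fun c hc =>
    convexHull_min (t := {x | g x ≤ c}) (fun x hx => (hgf x).trans hx)
      (by simpa only [mem_univ, true_and] using hg c) hc

theorem lowerSemicontinuous_sublevelHullEnv [TopologicalSpace E]
    (h : ∀ d : ℝ, IsClosed (convexHull ℝ {x | f x ≤ d})) :
    LowerSemicontinuous (sublevelHullEnv f) := by
  refine lowerSemicontinuous_iff_isClosed_preimage.2 fun c => ?_
  simpa only [preimage, mem_Iic, setOf_sublevelHullEnv_le] using
    isClosed_iInter fun d : ℝ => isClosed_iInter fun _ => h d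

end SublevelHull

theorem levelConvex_iff_quasiconvexOn {n : ℕ} {β : Type*} [LinearOrder β]
    {g : EuclideanSpace ℝ (Fin n) → β} : LevelConvex g ↔ QuasiconvexOn ℝ univ g := by
  rw [quasiconvexOn_iff_le_max]
  refine ⟨fun hg => ⟨convex_univ, fun x _ y _ a b ha hb hab => ?_⟩,
    fun hg x y t ht => hg.2 (mem_univ x) (mem_univ y) ht.1 (sub_nonneg.2 ht.2) (by ring)⟩
  obtain rfl : b = 1 - a := by linarith
  exact hg x y a ⟨ha, by linarith⟩

theorem lcEnv_eq_sublevelHullEnv {n : ℕ} (f : EuclideanSpace ℝ (Fin n) → EReal) :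
    lcEnv f = sublevelHullEnv f :=
  funext fun ξ => le_antisymm
    (iSup₂_le fun _g hg => (levelConvex_iff_quasiconvexOn.1 hg.1).le_sublevelHullEnv hg.2 ξ)
    (le_iSup₂_of_le (sublevelHullEnv f)
      ⟨levelConvex_iff_quasiconvexOn.2 (quasiconvexOn_sublevelHullEnv f),
        sublevelHullEnv_le_self f⟩ le_rfl)

theorem isBounded_sublevel_of_norm_le {E : Type*} [SeminormedAddCommGroup E] {f : E → EReal}
    {R : ℝ} (hR : ∀ ξ, R ≤ ‖ξ‖ → (‖ξ‖ : EReal) ≤ f ξ) (d : ℝ) :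
    Bornology.IsBounded {x | f x ≤ d} := by
  refine (Metric.isBounded_closedBall (x := 0) (r := max R d)).subset fun x hx => ?_
  rw [mem_closedBall_zero_iff]
  by_contra! hgt
  have hxd : ‖x‖ ≤ d := EReal.coe_le_coe_iff.1 ((hR x ((le_max_left R d).trans hgt.le)).trans hx)
  exact hxd.not_gt ((le_max_right R d).trans_lt hgt)

theorem lowerSemicontinuous_lcEnv_general {n : ℕ} (f : EuclideanSpace ℝ (Fin n) → EReal)
    (hsuperlin : ∀ M : ℝ, ∃ R : ℝ, ∀ ξ : EuclideanSpace ℝ (Fin n),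
      R ≤ ‖ξ‖ → ((M * ‖ξ‖ : ℝ) : EReal) ≤ f ξ)
    (hlsc : LowerSemicontinuous f) :
    LowerSemicontinuous (lcEnv f) := by
  obtain ⟨R, hR⟩ := hsuperlin 1
  have hsublevel_compact (d : ℝ) : IsCompact {x | f x ≤ d} :=
    Metric.isCompact_of_isClosed_isBounded (hlsc.isClosed_preimage d)
      (isBounded_sublevel_of_norm_le (fun ξ hξ => by simpa using hR ξ hξ) d)
  rw [lcEnv_eq_sublevelHullEnv]
  exact lowerSemicontinuous_sublevelHullEnv fun d => (hsublevel_compact d).convexHull.isClosed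

/-- If `f : ℝⁿ → (-∞,+∞]` is bounded from below, superlinear at infinity
(`f ξ / |ξ| → +∞`), and lower semicontinuous, then its level convex envelope `f^lc`
is lower semicontinuous. -/
theorem lowerSemicontinuous_lcEnv {n : ℕ} (f : EuclideanSpace ℝ (Fin n) → EReal)
    (hfbot : ∀ ξ, f ξ ≠ ⊥)
    (hbdd : ∃ C : ℝ, ∀ ξ, (C : EReal) ≤ f ξ)
    (hsuperlin : ∀ M : ℝ, ∃ R : ℝ, ∀ ξ : EuclideanSpace ℝ (Fin n),
      R ≤ ‖ξ‖ → ((M * ‖ξ‖ : ℝ) : EReal) ≤ f ξ)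
    (hlsc : LowerSemicontinuous f) :
    LowerSemicontinuous (lcEnv f) :=
  lowerSemicontinuous_lcEnv_general f hsuperlin hlsc
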